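/- Let q > 0, let (x_j : j ∈ ℕ) be a q-separated sequence in ℝ^d, and let λ > 0. Then for every 1 ≤ p ≤ ∞ the infinite matrix (e^{−λ‖x_j−x_k‖₂²})_{j,k∈ℕ} acts as a bounded linear operator on ℓ_p(ℕ): there is a constant M (depending on d, λ, q) such that for every (c_k) ∈ ℓ_p, the sequence (Σ_k e^{−λ‖x_j−x_k‖₂²} c_k)_j lies in ℓ_p with norm at most M‖(c_k)‖_p. -/

import Mathlib

/-!
The Gaussian matrix has uniformly bounded row sums: the balls of radius `q / 2` around the
points `x k` are pairwise disjoint, and on the ball around `x k` the Gaussian centred at `x j` is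
dominated by a fixed multiple of a wider Gaussian centred at `x j`, so the `j`-th row sum times the
volume of the ball is at most the integral of that wider Gaussian. The matrix is symmetric, so the
column sums obey the same bound, and Schur's test turns bounded row and column sums into a bound
on `ℓ_p` for every `1 ≤ p ≤ ∞`.
-/

open MeasureTheory Filter Complex Metric
open scoped RealInnerProductSpace ENNReal NNReal Topology Pointwise

noncomputable section

abbrev Rd (d : ℕ) := EuclideanSpace ℝ (Fin d)

/-- The exponential function `u ↦ e^{-i⟨x,u⟩}`. -/
def expF {d : ℕ} (x : Rd d) (u : Rd d) : ℂ :=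
  Complex.exp (-(Complex.I * ((⟪x, u⟫ : ℝ) : ℂ)))

/-- `(x_j)` is a Riesz-basis sequence for `L₂(S)`: every `h ∈ L₂(S)` has a unique
representation `h = ∑_j a_j e^{-i⟨x_j,·⟩}` with `(a_j) ∈ ℓ₂`. -/
def IsRieszBasisSeq {d : ℕ} (S : Set (Rd d)) (x : ℕ → Rd d) : Prop :=
  ∃ mem : ∀ j : ℕ, MemLp (expF (x j)) 2 (volume.restrict S),
    ∀ h : Lp ℂ 2 (volume.restrict S),
      ∃! a : lp (fun _ : ℕ => ℂ) 2,
        HasSum (fun j => (a j : ℂ) • ((mem j).toLp (expF (x j)))) h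

/-- `f` belongs to `PW_S`, identified with its continuous representative, and `F` is its
Fourier transform (normalization `F[f](x) = ∫ f(u) e^{-i⟨x,u⟩} du`), characterized through the
Fourier inversion formula. -/
def IsPW {d : ℕ} (S : Set (Rd d)) (f : Rd d → ℂ) (F : Rd d → ℂ) : Prop :=
  MemLp f 2 volume ∧ MemLp F 2 volume ∧ (∀ u ∉ S, F u = 0) ∧
    ∀ u : Rd d, f u = (((2 * Real.pi) ^ d : ℝ) : ℂ)⁻¹ *
      ∫ v in S, F v * Complex.exp (Complex.I * ((⟪v, u⟫ : ℝ) : ℂ))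

/-- The Gaussian `g_λ(y) = e^{-λ‖y‖₂²}`, as a complex-valued function. -/
def gaussC {d : ℕ} (lam : ℝ) (y : Rd d) : ℂ := ((Real.exp (-lam * ‖y‖ ^ 2) : ℝ) : ℂ)

/-- `(x_j)` is `q`-separated. -/
def Separated {d : ℕ} (q : ℝ) (x : ℕ → Rd d) : Prop :=
  ∀ k l : ℕ, k ≠ l → q ≤ ‖x k - x l‖

/-- `Rb` is a Riesz-basis constant for the exponential system `(e^{-i⟨x_j,·⟩})` in `L₂(Z)`. -/
def HasRieszConst {d : ℕ} (Z : Set (Rd d)) (x : ℕ → Rd d) (Rb : ℝ) : Prop :=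
  ∀ (T : Finset ℕ) (c : ℕ → ℂ),
    Rb⁻¹ * Real.sqrt (∑ j ∈ T, ‖c j‖ ^ 2) ≤
        Real.sqrt (∫ u in Z, ‖∑ j ∈ T, c j * expF (x j) u‖ ^ 2) ∧
      Real.sqrt (∫ u in Z, ‖∑ j ∈ T, c j * expF (x j) u‖ ^ 2) ≤
        Rb * Real.sqrt (∑ j ∈ T, ‖c j‖ ^ 2)

namespace ENNReal

theorem inner_le_Lp_mul_Lq_tsum {ι : Type*} {p q : ℝ} (hpq : p.HolderConjugate q)
    (f g : ι → ℝ≥0∞) :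
    ∑' i, f i * g i ≤ (∑' i, f i ^ p) ^ (1 / p) * (∑' i, g i ^ q) ^ (1 / q) := by
  let _ : MeasurableSpace ι := ⊤
  simpa only [lintegral_count, Pi.mul_apply] using
    lintegral_mul_le_Lp_mul_Lq (Measure.count : Measure ι) hpq measurable_from_top.aemeasurable
      measurable_from_top.aemeasurable

theorem rpow_tsum_mul_le {ι : Type*} {p : ℝ} (hp : 1 ≤ p) (a c : ι → ℝ≥0∞) :
    (∑' i, a i * c i) ^ p ≤ (∑' i, a i) ^ (p - 1) * ∑' i, a i * c i ^ p := by
  rcases hp.eq_or_lt with rfl | hp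
  · simp
  set q := p.conjExponent
  have hpq : p.HolderConjugate q := .conjExponent hp
  have hp0 : 0 < p := hpq.pos
  have hq0 : 0 < q := hpq.symm.pos
  -- Hölder applied to the splitting `a c = a ^ (1 / q) * (a ^ (1 / p) * c)`
  have hsplit : ∀ i, a i * c i = a i ^ (1 / q) * (a i ^ (1 / p) * c i) := fun i => by
    rw [← mul_assoc, ← rpow_add_of_nonneg _ _ (by positivity) (by positivity), add_comm,
      one_div, one_div, hpq.inv_add_inv_eq_one, rpow_one]
  calc (∑' i, a i * c i) ^ p
      ≤ ((∑' i, (a i ^ (1 / q)) ^ q) ^ (1 / q) *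
          (∑' i, (a i ^ (1 / p) * c i) ^ p) ^ (1 / p)) ^ p := by
        rw [tsum_congr hsplit]
        gcongr
        exact inner_le_Lp_mul_Lq_tsum hpq.symm _ _
    _ = (∑' i, a i) ^ (p - 1) * ∑' i, a i * c i ^ p := by
        have hq : ∀ i, (a i ^ (1 / q)) ^ q = a i := fun i => by
          rw [← rpow_mul, one_div_mul_cancel hq0.ne', rpow_one]
        have hp' : ∀ i, (a i ^ (1 / p) * c i) ^ p = a i * c i ^ p := fun i => by
          rw [mul_rpow_of_nonneg _ _ hp0.le, ← rpow_mul, one_div_mul_cancel hp0.ne', rpow_one]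
        simp only [hq, hp']
        rw [mul_rpow_of_nonneg _ _ hp0.le, ← rpow_mul, ← rpow_mul, one_div_mul_cancel hp0.ne',
          rpow_one, one_div_mul_eq_div, hpq.div_conj_eq_sub_one]

theorem tsum_rpow_tsum_mul_le {ι κ : Type*} {p : ℝ} (hp : 1 ≤ p) (A : ι → κ → ℝ≥0∞)
    (c : κ → ℝ≥0∞) {M : ℝ≥0∞} (hrow : ∀ j, ∑' k, A j k ≤ M) (hcol : ∀ k, ∑' j, A j k ≤ M) :
    ∑' j, (∑' k, A j k * c k) ^ p ≤ M ^ p * ∑' k, c k ^ p := by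
  calc ∑' j, (∑' k, A j k * c k) ^ p
      ≤ ∑' j, M ^ (p - 1) * ∑' k, A j k * c k ^ p := by
        gcongr with j
        exact (rpow_tsum_mul_le hp _ _).trans (by gcongr; exact hrow j)
    _ = M ^ (p - 1) * ∑' k, (∑' j, A j k) * c k ^ p := by
        rw [ENNReal.tsum_mul_left, ENNReal.tsum_comm]
        simp only [ENNReal.tsum_mul_right]
    _ ≤ M ^ (p - 1) * ∑' k, M * c k ^ p := by gcongr with k; exact hcol k
    _ = M ^ p * ∑' k, c k ^ p := by
        rw [ENNReal.tsum_mul_left, ← mul_assoc]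
        congr 1
        simpa using (rpow_add_of_nonneg (x := M) (p - 1) 1 (by linarith) zero_le_one).symm

end ENNReal

section lp

variable {ι κ : Type*}

theorem lp.tsum_enorm_rpow_eq {E : ι → Type*} [∀ i, NormedAddCommGroup (E i)] {p : ℝ≥0∞}
    (hp : 0 < p.toReal) (f : lp E p) :
    ∑' i, ‖f i‖ₑ ^ p.toReal = ENNReal.ofReal (‖f‖ ^ p.toReal) := by
  simp only [← ofReal_norm, ENNReal.ofReal_rpow_of_nonneg (norm_nonneg _) hp.le]
  rw [← ENNReal.ofReal_tsum_of_nonneg (fun i => by positivity) ((lp.memℓp f).summable hp),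
    lp.norm_rpow_eq_tsum hp]

theorem exists_memℓp_norm_le_of_tsum_enorm_rpow_le {E : ι → Type*}
    [∀ i, NormedAddCommGroup (E i)] {p : ℝ≥0∞} (hp : 0 < p.toReal) {f : ∀ i, E i} {B : ℝ}
    (hB : 0 ≤ B) (h : ∑' i, ‖f i‖ₑ ^ p.toReal ≤ ENNReal.ofReal (B ^ p.toReal)) :
    ∃ hf : Memℓp f p, ‖(⟨f, hf⟩ : lp E p)‖ ≤ B := by
  have hterm : ∀ i, ‖f i‖ₑ ^ p.toReal = ENNReal.ofReal (‖f i‖ ^ p.toReal) := fun i => by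
    rw [← ofReal_norm, ENNReal.ofReal_rpow_of_nonneg (norm_nonneg _) hp.le]
  simp only [hterm] at h
  have hsum : Summable fun i => ‖f i‖ ^ p.toReal := by
    simpa [ENNReal.toReal_ofReal, Real.rpow_nonneg] using
      ENNReal.summable_toReal (ne_top_of_le_ne_top ENNReal.ofReal_ne_top h)
  refine ⟨memℓp_gen hsum, lp.norm_le_of_tsum_le hp hB ?_⟩
  rwa [← ENNReal.ofReal_tsum_of_nonneg (fun i => by positivity) hsum,
    ENNReal.ofReal_le_ofReal_iff (by positivity)] at h

theorem exists_memℓp_infty_norm_le_of_enorm_le {E : ι → Type*} [∀ i, NormedAddCommGroup (E i)]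
    {f : ∀ i, E i} {B : ℝ} (hB : 0 ≤ B) (h : ∀ i, ‖f i‖ₑ ≤ ENNReal.ofReal B) :
    ∃ hf : Memℓp f ∞, ‖(⟨f, hf⟩ : lp E ∞)‖ ≤ B := by
  have h' : ∀ i, ‖f i‖ ≤ B := fun i => by
    rw [← ENNReal.ofReal_le_ofReal_iff hB, ofReal_norm]
    exact h i
  exact ⟨memℓp_infty ⟨B, Set.forall_mem_range.2 h'⟩, lp.norm_le_of_forall_le hB h'⟩

variable {𝕜 : Type*} [NormedField 𝕜] [CompleteSpace 𝕜] {p : ℝ≥0∞}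

theorem summable_mul_of_tsum_enorm_le {K : κ → 𝕜} {M : ℝ≥0} (hK : ∑' k, ‖K k‖ₑ ≤ M)
    (hp : p ≠ 0) (c : lp (fun _ : κ => 𝕜) p) : Summable fun k => K k * c k := by
  have hKsum : Summable fun k => ‖K k‖ :=
    tsum_enorm_ne_top_iff_summable_norm.1 (ne_top_of_le_ne_top ENNReal.coe_ne_top hK)
  refine Summable.of_norm_bounded (hKsum.mul_right ‖c‖) fun k => ?_
  rw [norm_mul]
  gcongr
  exact lp.norm_apply_le_norm hp c k

theorem lp.schur_test (hp : 1 ≤ p) (K : ι → κ → 𝕜) {M : ℝ≥0}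
    (hrow : ∀ j, ∑' k, ‖K j k‖ₑ ≤ M) (hcol : ∀ k, ∑' j, ‖K j k‖ₑ ≤ M)
    (c : lp (fun _ : κ => 𝕜) p) :
    (∀ j, Summable fun k => K j k * c k) ∧
      ∃ h : Memℓp (fun j => ∑' k, K j k * c k) p,
        ‖(⟨_, h⟩ : lp (fun _ : ι => 𝕜) p)‖ ≤ M * ‖c‖ := by
  have hp0 : p ≠ 0 := (zero_lt_one.trans_le hp).ne'
  refine ⟨fun j => summable_mul_of_tsum_enorm_le (hrow j) hp0 c, ?_⟩
  have hentry : ∀ j, ‖∑' k, K j k * c k‖ₑ ≤ ∑' k, ‖K j k‖ₑ * ‖c k‖ₑ := fun j =>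
    enorm_tsum_le_tsum_enorm.trans_eq (by simp only [enorm_mul])
  have hMc : 0 ≤ (M : ℝ) * ‖c‖ := mul_nonneg M.coe_nonneg (lp.norm_nonneg' c)
  rcases eq_or_ne p ∞ with rfl | hptop
  · refine exists_memℓp_infty_norm_le_of_enorm_le hMc fun j => ?_
    calc ‖∑' k, K j k * c k‖ₑ ≤ ∑' k, ‖K j k‖ₑ * ENNReal.ofReal ‖c‖ := by
          refine (hentry j).trans (ENNReal.tsum_le_tsum fun k => ?_)
          gcongr
          rw [← ofReal_norm]
          exact ENNReal.ofReal_le_ofReal (lp.norm_apply_le_norm hp0 c k)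
      _ ≤ M * ENNReal.ofReal ‖c‖ := by rw [ENNReal.tsum_mul_right]; gcongr; exact hrow j
      _ = ENNReal.ofReal (M * ‖c‖) := by
          rw [ENNReal.ofReal_mul M.coe_nonneg, ENNReal.ofReal_coe_nnreal]
  · have hP : 1 ≤ p.toReal := by
      simpa using ENNReal.toReal_mono hptop hp
    have hP0 : 0 < p.toReal := zero_lt_one.trans_le hP
    refine exists_memℓp_norm_le_of_tsum_enorm_rpow_le hP0 hMc ?_
    calc ∑' j, ‖∑' k, K j k * c k‖ₑ ^ p.toReal
        ≤ ∑' j, (∑' k, ‖K j k‖ₑ * ‖c k‖ₑ) ^ p.toReal := by gcongr with j; exact hentry j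
      _ ≤ M ^ p.toReal * ∑' k, ‖c k‖ₑ ^ p.toReal :=
        ENNReal.tsum_rpow_tsum_mul_le hP _ _ hrow hcol
      _ = ENNReal.ofReal ((M * ‖c‖) ^ p.toReal) := by
        rw [lp.tsum_enorm_rpow_eq hP0, Real.mul_rpow M.coe_nonneg (lp.norm_nonneg' c),
          ENNReal.ofReal_mul (by positivity), ← ENNReal.ofReal_rpow_of_nonneg M.coe_nonneg hP0.le,
          ENNReal.ofReal_coe_nnreal]

end lp

theorem tsum_mul_measure_ball_le_lintegral {X ι : Type*} [PseudoMetricSpace X]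
    [MeasurableSpace X] [OpensMeasurableSpace X] [Countable ι] (μ : Measure X) {x : ι → X}
    {r : ℝ} (hx : Pairwise fun k l => 2 * r ≤ dist (x k) (x l)) {f : ι → ℝ≥0∞}
    {g : X → ℝ≥0∞} (hfg : ∀ k, ∀ u ∈ ball (x k) r, f k ≤ g u) :
    ∑' k, f k * μ (ball (x k) r) ≤ ∫⁻ u, g u ∂μ := by
  have hdisj : Pairwise (Function.onFun Disjoint fun k => ball (x k) r) := fun k l hkl =>
    ball_disjoint_ball (by linarith [hx hkl])
  calc ∑' k, f k * μ (ball (x k) r) = ∑' k, ∫⁻ _ in ball (x k) r, f k ∂μ := by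
        simp only [setLIntegral_const]
    _ ≤ ∑' k, ∫⁻ u in ball (x k) r, g u ∂μ :=
        ENNReal.tsum_le_tsum fun k => setLIntegral_mono' measurableSet_ball (hfg k)
    _ = ∫⁻ u in ⋃ k, ball (x k) r, g u ∂μ :=
        (lintegral_iUnion (fun _ => measurableSet_ball) hdisj g).symm
    _ ≤ ∫⁻ u, g u ∂μ := setLIntegral_le_lintegral _ _

theorem Real.exp_neg_mul_sq_norm_sub_le_of_mem_ball {E : Type*} [SeminormedAddCommGroup E]
    {lam r : ℝ} (hlam : 0 ≤ lam) {y z u : E} (hu : u ∈ ball z r) :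
    Real.exp (-lam * ‖y - z‖ ^ 2) ≤ Real.exp (lam * r ^ 2 + -(lam / 2) * ‖u - y‖ ^ 2) := by
  have hs : ‖u - y‖ ≤ r + ‖y - z‖ := by
    calc ‖u - y‖ = ‖(u - z) - (y - z)‖ := by rw [sub_sub_sub_cancel_right]
      _ ≤ ‖u - z‖ + ‖y - z‖ := norm_sub_le _ _
      _ ≤ r + ‖y - z‖ := by gcongr; exact (mem_ball_iff_norm.1 hu).le
  have hs2 : ‖u - y‖ ^ 2 ≤ 2 * r ^ 2 + 2 * ‖y - z‖ ^ 2 := by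
    nlinarith [norm_nonneg (u - y), sq_nonneg (r - ‖y - z‖)]
  rw [Real.exp_le_exp]
  nlinarith

theorem lintegral_exp_neg_mul_sq_norm_ne_top {V : Type*} [NormedAddCommGroup V]
    [InnerProductSpace ℝ V] [FiniteDimensional ℝ V] [MeasurableSpace V] [BorelSpace V]
    {b : ℝ} (hb : 0 < b) (a : ℝ) :
    ∫⁻ u : V, ENNReal.ofReal (Real.exp (a + -b * ‖u‖ ^ 2)) ≠ ∞ := by
  have hint : Integrable fun u : V => Real.exp (-b * ‖u‖ ^ 2) := by
    refine Integrable.of_integral_ne_zero ?_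
    rw [GaussianFourier.integral_rexp_neg_mul_sq_norm hb]
    positivity
  simp only [Real.exp_add]
  exact ((hint.const_mul (Real.exp a)).lintegral_lt_top).ne

theorem exists_tsum_exp_neg_mul_sq_norm_sub_le {V ι : Type*} [NormedAddCommGroup V]
    [InnerProductSpace ℝ V] [FiniteDimensional ℝ V] [MeasurableSpace V] [BorelSpace V]
    [Countable ι] {x : ι → V} {q : ℝ} (hq : 0 < q)
    (hx : Pairwise fun k l => q ≤ dist (x k) (x l)) {lam : ℝ} (hlam : 0 < lam) :
    ∃ M : ℝ≥0, ∀ y, ∑' k, ENNReal.ofReal (Real.exp (-lam * ‖y - x k‖ ^ 2)) ≤ M := by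
  set G := ∫⁻ u : V, ENNReal.ofReal (Real.exp (lam * (q / 2) ^ 2 + -(lam / 2) * ‖u‖ ^ 2))
  have hG : G ≠ ∞ := lintegral_exp_neg_mul_sq_norm_ne_top (by positivity) _
  have hball : volume (ball (0 : V) (q / 2)) ≠ 0 := (measure_ball_pos _ _ (by positivity)).ne'
  refine ⟨(G / volume (ball (0 : V) (q / 2))).toNNReal, fun y => ?_⟩
  rw [ENNReal.coe_toNNReal (ENNReal.div_ne_top hG hball),
    ENNReal.le_div_iff_mul_le (Or.inl hball) (Or.inl measure_ball_lt_top.ne),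
    ← ENNReal.tsum_mul_right]
  calc ∑' k, ENNReal.ofReal (Real.exp (-lam * ‖y - x k‖ ^ 2)) * volume (ball (0 : V) (q / 2))
      = ∑' k, ENNReal.ofReal (Real.exp (-lam * ‖y - x k‖ ^ 2)) * volume (ball (x k) (q / 2)) := by
        simp only [Measure.addHaar_ball_center]
    _ ≤ ∫⁻ u, ENNReal.ofReal (Real.exp (lam * (q / 2) ^ 2 + -(lam / 2) * ‖u - y‖ ^ 2)) :=
        tsum_mul_measure_ball_le_lintegral volume (r := q / 2) (fun k l hkl => by linarith [hx hkl])
          fun k u hu => ENNReal.ofReal_le_ofReal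
            (Real.exp_neg_mul_sq_norm_sub_le_of_mem_ball hlam.le hu)
    _ = G := lintegral_sub_right_eq_self
        (fun u => ENNReal.ofReal (Real.exp (lam * (q / 2) ^ 2 + -(lam / 2) * ‖u‖ ^ 2))) y

theorem enorm_gaussC {d : ℕ} (lam : ℝ) (y : Rd d) :
    ‖gaussC lam y‖ₑ = ENNReal.ofReal (Real.exp (-lam * ‖y‖ ^ 2)) := by
  rw [gaussC, ← ofReal_norm, Complex.norm_real, Real.norm_of_nonneg (Real.exp_pos _).le]

/-- For a `q`-separated sequence and `λ > 0`, the Gaussian matrix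
`(e^{-λ‖x_j-x_k‖²})_{j,k}` acts as a bounded operator on `ℓ_p` for all `1 ≤ p ≤ ∞`,
with norm bounded by a constant `M` depending only on `d`, `λ`, `q`. -/
theorem gaussian_matrix_bounded_on_lp (d : ℕ) (q : ℝ) (hq : 0 < q)
    (x : ℕ → Rd d) (hsep : Separated q x) (lam : ℝ) (hlam : 0 < lam) :
    ∃ M > 0, ∀ p : ℝ≥0∞, 1 ≤ p → ∀ c : lp (fun _ : ℕ => ℂ) p,
      (∀ j, Summable fun k => gaussC lam (x j - x k) * c k) ∧
      ∃ h : Memℓp (fun j => ∑' k, gaussC lam (x j - x k) * c k) p,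
        ‖(⟨_, h⟩ : lp (fun _ : ℕ => ℂ) p)‖ ≤ M * ‖c‖ := by
  obtain ⟨M, hM⟩ := exists_tsum_exp_neg_mul_sq_norm_sub_le hq
    (fun k l hkl => by simpa only [dist_eq_norm] using hsep k l hkl) hlam
  have hrow : ∀ j, ∑' k, ‖gaussC lam (x j - x k)‖ₑ ≤ M := fun j => by
    simpa only [enorm_gaussC] using hM (x j)
  have hcol : ∀ k, ∑' j, ‖gaussC lam (x j - x k)‖ₑ ≤ M := fun k => by
    simp only [enorm_gaussC, norm_sub_rev _ (x k)]
    exact hM (x k)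
  refine ⟨M + 1, by positivity, fun p hp c => ?_⟩
  obtain ⟨hsum, hmem, hnorm⟩ := lp.schur_test hp _ hrow hcol c
  exact ⟨hsum, hmem, hnorm.trans (mul_le_mul_of_nonneg_right (by simp) (lp.norm_nonneg' c))⟩
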